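/- Let f : X → X be a pointwise periodic homeomorphism of a compact metric space X. If (X, f) is not equicontinuous, then there exists a nonempty closed set A ∈ 2^X that is recurrent for 2^f but not almost periodic for 2^f; i.e. R(2^f) \ AP(2^f) ≠ ∅. -/

import Mathlib

/-!
Failure of equicontinuity at a point `x` gives points `z k → x` that eventually leave every small
neighbourhood of the finite orbit of `x`; a limit `w` of such escaping iterates is a periodic point
whose orbit misses `x`. A subsequence of `z`, chosen so that each new point shadows `x` up to a
common period of `x` and of all earlier points, together with `x` forms a compact set `A` that is
moved less and less at those periods, hence is recurrent. But `A` lies near `x` while its iterates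
come close to `w`, whose whole orbit stays away from `x`, so `A` is not almost periodic.
-/

open TopologicalSpace Metric Set Filter

/-- The induced map on the hyperspace of nonempty compact (= closed) subsets. -/
noncomputable def hyper {X : Type*} [MetricSpace X] (f : X ≃ₜ X) :
    NonemptyCompacts X → NonemptyCompacts X :=
  fun A => ⟨⟨f '' A, A.isCompact.image f.continuous⟩, A.nonempty.image f⟩

/-- `x` is uniformly recurrent for `g`. -/
def IsUnifRec {α : Type*} [MetricSpace α] (g : α → α) (x : α) : Prop :=
  ∀ ε > (0:ℝ), ∃ N > 0, ∀ k : ℕ, dist (g^[k * N] x) x < ε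

/-- `x` is recurrent for `g` (it belongs to its own ω-limit set). -/
def IsRec {α : Type*} [MetricSpace α] (g : α → α) (x : α) : Prop :=
  ∀ ε > (0:ℝ), ∀ m : ℕ, ∃ n ≥ m, 0 < n ∧ dist (g^[n] x) x < ε

/-- `x` is almost periodic for `g`. -/
def IsAP {α : Type*} [MetricSpace α] (g : α → α) (x : α) : Prop :=
  ∀ ε > (0:ℝ), ∃ N : ℕ, ∀ n : ℕ, ∃ i < N, dist (g^[n + i] x) x < ε

/-- `(x, y)` is an asymptotic pair for `g`. -/
def Asymp {α : Type*} [MetricSpace α] (g : α → α) (x y : α) : Prop :=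
  Filter.Tendsto (fun n => dist (g^[n] x) (g^[n] y)) Filter.atTop (nhds 0)

/-- `(x, y)` is a proximal pair for `g`. -/
def Proximal {α : Type*} [MetricSpace α] (g : α → α) (x y : α) : Prop :=
  ∀ ε > (0:ℝ), ∀ m : ℕ, ∃ n ≥ m, dist (g^[n] x) (g^[n] y) < ε

/-- The ω-limit set of `x` under `g`. -/
def omegaSet {α : Type*} [MetricSpace α] (g : α → α) (x : α) : Set α :=
  {y | ∀ ε > (0:ℝ), ∀ m : ℕ, ∃ n ≥ m, dist (g^[n] x) y < ε}

/-- `M` is a minimal set of `g`. -/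
def IsMinimalFor {α : Type*} [TopologicalSpace α] (g : α → α) (M : Set α) : Prop :=
  M.Nonempty ∧ IsClosed M ∧ Set.MapsTo g M M ∧
    ∀ M' ⊆ M, M'.Nonempty → IsClosed M' → Set.MapsTo g M' M' → M' = M

/-- `A` is internally chain transitive for `g`. -/
def ICT {α : Type*} [MetricSpace α] (g : α → α) (A : Set α) : Prop :=
  ∀ a ∈ A, ∀ b ∈ A, ∀ ε > (0:ℝ), ∃ N : ℕ, 1 ≤ N ∧ ∃ c : ℕ → α,
    c 0 = a ∧ c N = b ∧ (∀ i ≤ N, c i ∈ A) ∧ ∀ i < N, dist (g (c i)) (c (i + 1)) < ε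

open Function Topology

section Metric

variable {X : Type*} [MetricSpace X]

theorem Set.Finite.exists_pos_forall_le_dist {s : Set X} (hs : s.Finite) :
    ∃ D > 0, ∀ ⦃a⦄, a ∈ s → ∀ ⦃b⦄, b ∈ s → a ≠ b → D ≤ dist a b := by
  have hpairs : {q ∈ s ×ˢ s | q.1 ≠ q.2}.Finite := (hs.prod hs).subset (sep_subset _ _)
  have hsmall : ∀ᶠ D in 𝓝[>] (0 : ℝ), ∀ q ∈ {q ∈ s ×ˢ s | q.1 ≠ q.2}, D ≤ dist q.1 q.2 :=
    hpairs.eventually_all.2 fun q hq =>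
      nhdsWithin_le_nhds (eventually_le_nhds (dist_pos.2 hq.2))
  obtain ⟨D, hD, hDpos⟩ := (hsmall.and self_mem_nhdsWithin).exists
  exact ⟨D, hDpos, fun a ha b hb hab => hD (a, b) ⟨⟨ha, hb⟩, hab⟩⟩

theorem isRec_of_tendsto {g : X → X} {y : X} {t : ℕ → ℕ} (ht : Tendsto t atTop atTop)
    (hpos : ∀ m, 0 < t m) (hy : Tendsto (fun m => dist (g^[t m] y) y) atTop (𝓝 0)) :
    IsRec g y := by
  intro ε hε m₀
  obtain ⟨m, hm₀, hm⟩ := ((ht.eventually_ge_atTop m₀).and (hy.eventually (gt_mem_nhds hε))).exists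
  exact ⟨t m, hm₀, hpos m, hm⟩

end Metric

theorem exists_seq_forall_rel_succ {α : Type*} {P : α → Prop} {R : α → α → Prop} {a : α}
    (ha : P a) (h : ∀ s, P s → ∃ s', P s' ∧ R s s') :
    ∃ u : ℕ → α, (∀ n, P (u n)) ∧ ∀ n, R (u n) (u (n + 1)) := by
  choose next hnext using fun s : {s // P s} => h s.1 s.2
  let u : ℕ → {s // P s} := fun n => (fun s => ⟨next s, (hnext s).1⟩)^[n] ⟨a, ha⟩
  refine ⟨fun n => (u n).1, fun n => (u n).2, fun n => ?_⟩
  simp only [u, iterate_succ_apply']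
  exact (hnext _).2

theorem Function.IsPeriodicPt.finite_range_iterate {α : Type*} {g : α → α} {p : ℕ} {y : α}
    (hp : 0 < p) (hy : IsPeriodicPt g p y) : (range fun n => g^[n] y).Finite :=
  ((finite_Iio p).image fun n => g^[n] y).subset <| by
    rintro _ ⟨n, rfl⟩
    exact ⟨n % p, Nat.mod_lt n hp, hy.iterate_mod_apply n⟩

section Dynamics

variable {X : Type*} [MetricSpace X] {g : X → X}

theorem eventually_forall_dist_iterate_lt (hg : Continuous g) (x : X) (T : ℕ) {ε : ℝ}
    (hε : 0 < ε) : ∀ᶠ u in 𝓝 x, ∀ j ≤ T, dist (g^[j] u) (g^[j] x) < ε :=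
  (finite_Iic T).eventually_all.2 fun j _ =>
    ((hg.iterate j).tendsto x).eventually (ball_mem_nhds _ hε)

theorem exists_pos_forall_lt_dist_iterate {w x : X} {p : ℕ} (hp : 0 < p) (hw : IsPeriodicPt g p w)
    (hwx : ∀ i, g^[i] w ≠ x) : ∃ r > 0, ∀ i, r < dist (g^[i] w) x := by
  have hx : x ∈ (range fun i => g^[i] w)ᶜ := by
    rintro ⟨i, hi⟩
    exact hwx i hi
  obtain ⟨r, hr, hball⟩ :=
    Metric.isOpen_iff.1 (hw.finite_range_iterate hp).isClosed.isOpen_compl x hx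
  refine ⟨r / 2, half_pos hr, fun i => ?_⟩
  have : g^[i] w ∉ ball x r := fun h => hball h (mem_range_self i)
  rw [mem_ball, not_lt] at this
  linarith

theorem exists_seq_tendsto_le_dist_iterate (h : ¬ Equicontinuous fun n : ℕ => g^[n]) :
    ∃ x, ∃ ε > 0, ∃ z : ℕ → X, Tendsto z atTop (𝓝 x) ∧
      ∀ k, ∃ n, ε ≤ dist (g^[n] x) (g^[n] (z k)) := by
  obtain ⟨x, hx⟩ := not_forall.1 h
  rw [Metric.equicontinuousAt_iff] at hx
  push Not at hx
  obtain ⟨ε, hε, hfar⟩ := hx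
  choose z hzx hz using fun k : ℕ => hfar (1 / (k + 1)) Nat.one_div_pos_of_nat
  refine ⟨x, ε, hε, z, ?_, hz⟩
  rw [tendsto_iff_dist_tendsto_zero]
  exact squeeze_zero (fun _ => dist_nonneg) (fun k => (hzx k).le)
    tendsto_one_div_add_atTop_nhds_zero_nat

/-- The orbit of `x` is finite, hence `D`-separated: if `g^[n] u` is `α`-close to `g^[n] x`, then
`g^[n + 1] u` is `D / 2`-close to `g^[n + 1] x`, so the orbit point it is `α`-close to can only be
`g^[n + 1] x`. -/
theorem Function.IsPeriodicPt.exists_forall_dist_iterate_lt (hg : UniformContinuous g) {x : X}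
    {p : ℕ} (hp : 0 < p) (hx : IsPeriodicPt g p x) {ε : ℝ} (hε : 0 < ε) :
    ∃ α > 0, α ≤ ε ∧ ∀ u, dist u x < α → (∀ j, ∃ i, dist (g^[j] u) (g^[i] x) < α) →
      ∀ n, dist (g^[n] u) (g^[n] x) < α := by
  obtain ⟨D, hD, hsep⟩ := (hx.finite_range_iterate hp).exists_pos_forall_le_dist
  obtain ⟨δ, hδ, hgδ⟩ := Metric.uniformContinuous_iff.1 hg (D / 2) (half_pos hD)
  set α := min δ (min (D / 2) ε)
  have hαδ : α ≤ δ := min_le_left _ _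
  have hαD : α ≤ D / 2 := (min_le_right _ _).trans (min_le_left _ _)
  refine ⟨α, lt_min hδ (lt_min (half_pos hD) hε), (min_le_right _ _).trans (min_le_right _ _),
    fun u hu hnear n => ?_⟩
  induction n with
  | zero => simpa using hu
  | succ n ih =>
    obtain ⟨i, hi⟩ := hnear (n + 1)
    have hnext : dist (g^[n + 1] u) (g^[n + 1] x) < D / 2 := by
      simp only [iterate_succ_apply']
      exact hgδ (ih.trans_le hαδ)
    have hix : g^[i] x = g^[n + 1] x := by
      by_contra hne
      have := hsep (mem_range_self i) (mem_range_self (n + 1)) hne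
      linarith [dist_triangle_left (g^[i] x) (g^[n + 1] x) (g^[n + 1] u)]
    rwa [← hix]

theorem exists_tendsto_iterate_forall_iterate_ne [CompactSpace X] (hg : Continuous g)
    (hper : ∀ y, ∃ n > 0, IsPeriodicPt g n y) (hne : ¬ Equicontinuous fun n : ℕ => g^[n]) :
    ∃ x w : X, ∃ z : ℕ → X, ∃ v : ℕ → ℕ, Tendsto z atTop (𝓝 x) ∧
      Tendsto (fun k => g^[v k] (z k)) atTop (𝓝 w) ∧ ∀ i, g^[i] w ≠ x := by
  obtain ⟨x, ε, hε, z, hz, hsep⟩ := exists_seq_tendsto_le_dist_iterate hne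
  obtain ⟨p, hp, hx⟩ := hper x
  obtain ⟨α, hα, hαε, htrack⟩ :=
    hx.exists_forall_dist_iterate_lt (CompactSpace.uniformContinuous_of_continuous hg) hp hε
  have hescape : ∀ᶠ k in atTop, ∃ j, ∀ i, α ≤ dist (g^[j] (z k)) (g^[i] x) := by
    filter_upwards [hz.eventually (ball_mem_nhds x hα)] with k hk
    by_contra! hnear
    obtain ⟨n, hn⟩ := hsep k
    linarith [dist_comm (g^[n] x) (g^[n] (z k)), htrack (z k) hk hnear n]
  obtain ⟨k₀, hk₀⟩ := eventually_atTop.1 hescape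
  choose j hj using fun k => hk₀ (k + k₀) (Nat.le_add_left k₀ k)
  obtain ⟨w, ψ, hψ, hw⟩ := CompactSpace.tendsto_subseq fun k => g^[j k] (z (k + k₀))
  refine ⟨x, w, fun k => z (ψ k + k₀), fun k => j (ψ k),
    hz.comp ((tendsto_add_atTop_nat k₀).comp hψ.tendsto_atTop), hw, fun i hi => ?_⟩
  have hfar : ∀ i, α ≤ dist w (g^[i] x) := fun i =>
    ge_of_tendsto (hw.dist tendsto_const_nhds) (Eventually.of_forall fun k => hj (ψ k) i)
  obtain ⟨q, hq, hwq⟩ := hper w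
  have hwx : g^[(q - 1) * i] x = w := by
    rw [← hi, ← iterate_add_apply, ← add_one_mul, Nat.sub_one_add_one hq.ne']
    exact (hwq.mul_const i).eq
  have := hfar ((q - 1) * i)
  rw [hwx, dist_self] at this
  exact hα.not_ge this

/-- Stage `m` is a pair `(K m, t m)` where `t m` is a common period of `x` and of the points
`z (K i)`, `i ≤ m`; the next point is chosen to shadow `x` up to time `t m` with precision
`(t m)⁻¹`, so at time `t m` every later point, like `x` and the earlier ones, moves by at most
`2 / t m`. -/
theorem exists_strictMono_forall_dist_iterate_le (hg : Continuous g)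
    (hper : ∀ y, ∃ n > 0, IsPeriodicPt g n y) {x : X} {z : ℕ → X} (hz : Tendsto z atTop (𝓝 x)) :
    ∃ K : ℕ → ℕ, StrictMono K ∧ ∃ t : ℕ → ℕ, StrictMono t ∧ 0 < t 0 ∧
      ∀ m, ∀ a ∈ insert x (range (z ∘ K)), dist (g^[t m] a) a ≤ 2 / t m := by
  obtain ⟨p, hp, hxp⟩ := hper x
  obtain ⟨q, hq, hzq⟩ := hper (z 0)
  obtain ⟨u, hP, hR⟩ := exists_seq_forall_rel_succ
    (P := fun s : ℕ × ℕ => 0 < s.2 ∧ IsPeriodicPt g s.2 x ∧ IsPeriodicPt g s.2 (z s.1))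
    (R := fun s s' => s.1 < s'.1 ∧ s.2 ∣ s'.2 ∧ s.2 < s'.2 ∧
      ∀ j ≤ s.2, dist (g^[j] (z s'.1)) (g^[j] x) < (s.2 : ℝ)⁻¹)
    (a := (0, p * q)) ⟨mul_pos hp hq, hxp.mul_const q, hzq.const_mul p⟩ (by
      rintro ⟨k, t⟩ ⟨ht, htx, -⟩
      obtain ⟨k', hk', hshadow⟩ := ((eventually_gt_atTop k).and (hz.eventually
        (eventually_forall_dist_iterate_lt hg x t (inv_pos.2 (Nat.cast_pos.2 ht))))).exists
      obtain ⟨q', hq', hzq'⟩ := hper (z k')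
      exact ⟨(k', 2 * q' * t), ⟨by positivity, htx.const_mul _, hzq'.trans_dvd ⟨2 * t, by ring⟩⟩,
        hk', dvd_mul_left t _, by nlinarith, hshadow⟩)
  set t := fun m => (u m).2
  have ht : StrictMono t := strictMono_nat_of_lt_succ fun m => (hR m).2.2.1
  have htx : ∀ m, g^[t m] x = x := fun m => (hP m).2.1.eq
  refine ⟨fun m => (u m).1, strictMono_nat_of_lt_succ fun m => (hR m).1, t, ht, (hP 0).1, ?_⟩
  rintro m a (rfl | ⟨i, rfl⟩)
  · rw [htx, dist_self]
    positivity
  rcases le_or_gt i m with him | hmi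
  · have hdvd : t i ∣ t m := Nat.rel_of_forall_rel_succ_of_le (· ∣ ·) (fun m => (hR m).2.1) him
    rw [Function.comp_apply, ((hP i).2.2.trans_dvd hdvd).eq, dist_self]
    positivity
  obtain ⟨l, hl, rfl⟩ : ∃ l, m ≤ l ∧ i = l + 1 := ⟨i - 1, by omega, by omega⟩
  set a := z (u (l + 1)).1
  have htl : t m ≤ t l := ht.monotone hl
  have hinv : (t l : ℝ)⁻¹ ≤ (t m : ℝ)⁻¹ :=
    inv_anti₀ (Nat.cast_pos.2 (hP m).1) (Nat.cast_le.2 htl)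
  have hmoved : dist (g^[t m] a) x < (t l : ℝ)⁻¹ := htx m ▸ (hR l).2.2.2 _ htl
  have hnear : dist a x < (t l : ℝ)⁻¹ := (hR l).2.2.2 0 (Nat.zero_le _)
  show dist (g^[t m] a) a ≤ 2 / t m
  rw [div_eq_mul_inv]
  linarith [dist_triangle_right (g^[t m] a) a x]

end Dynamics

section Hyperspace

variable {X : Type*} [MetricSpace X] (f : X ≃ₜ X)

theorem coe_hyper_iterate (n : ℕ) (A : NonemptyCompacts X) :
    ((hyper f)^[n] A : Set X) = f^[n] '' A := by
  induction n with
  | zero => simp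
  | succ n ih => rw [iterate_succ_apply', iterate_succ', image_comp, ← ih]; rfl

theorem dist_hyper_iterate_le {A : NonemptyCompacts X} {n : ℕ} {r : ℝ} (hr : 0 ≤ r)
    (h : ∀ a ∈ A, dist (f^[n] a) a ≤ r) : dist ((hyper f)^[n] A) A ≤ r := by
  rw [NonemptyCompacts.dist_eq, coe_hyper_iterate]
  refine hausdorffDist_le_of_mem_dist hr ?_ fun a ha => ⟨f^[n] a, mem_image_of_mem _ ha, ?_⟩
  · rintro _ ⟨a, ha, rfl⟩
    exact ⟨a, ha, h a ha⟩
  · rw [dist_comm]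
    exact h a ha

theorem exists_dist_iterate_lt_of_dist_hyper_iterate_lt {A : NonemptyCompacts X} {n : ℕ} {r : ℝ}
    (h : dist ((hyper f)^[n] A) A < r) {a : X} (ha : a ∈ A) : ∃ b ∈ A, dist (f^[n] a) b < r :=
  exists_dist_lt_of_hausdorffDist_lt (by rw [coe_hyper_iterate]; exact mem_image_of_mem _ ha) h
    (edist_ne_top ((hyper f)^[n] A) A)

theorem not_isAP_hyper {A : NonemptyCompacts X} {x w : X} {c : ℝ} (hc : 0 < c)
    (hA : (A : Set X) ⊆ closedBall x c) (hwA : w ∈ closure (⋃ n, f^[n] '' A))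
    (hw : ∀ i, 2 * c < dist (f^[i] w) x) : ¬ IsAP (hyper f) A := by
  intro hAP
  obtain ⟨N, hN⟩ := hAP c hc
  have hnear : ∀ᶠ y in 𝓝 w, ∀ i ∈ Iio N, 2 * c < dist (f^[i] y) x :=
    (finite_Iio N).eventually_all.2 fun i _ =>
      (((f.continuous.iterate i).dist continuous_const).tendsto w).eventually (lt_mem_nhds (hw i))
  obtain ⟨_, hfar, hy⟩ := mem_closure_iff_nhds.1 hwA _ hnear
  obtain ⟨n, a, ha, rfl⟩ := mem_iUnion.1 hy
  obtain ⟨i, hi, hd⟩ := hN n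
  obtain ⟨b, hb, hab⟩ := exists_dist_iterate_lt_of_dist_hyper_iterate_lt f hd ha
  rw [add_comm, iterate_add_apply] at hab
  linarith [hfar i hi, dist_triangle (f^[i] (f^[n] a)) b x, mem_closedBall.1 (hA hb)]

end Hyperspace

theorem stmt19 {X : Type*} [MetricSpace X] [CompactSpace X]
    (f : X ≃ₜ X) (hper : ∀ x : X, ∃ n > 0, (⇑f)^[n] x = x)
    (hne : ¬ (∀ ε > (0:ℝ), ∃ δ > (0:ℝ), ∀ x y : X, dist x y < δ →
      ∀ n : ℕ, dist ((⇑f)^[n] x) ((⇑f)^[n] y) < ε)) :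
    ∃ A : NonemptyCompacts X, IsRec (hyper f) A ∧ ¬ IsAP (hyper f) A := by
  obtain ⟨x, w, z, v, hzx, hzw, hwx⟩ := exists_tendsto_iterate_forall_iterate_ne f.continuous hper
    fun h => hne (Metric.uniformEquicontinuous_iff.1
      (CompactSpace.uniformEquicontinuous_of_equicontinuous h))
  obtain ⟨p, hp, hwp⟩ := hper w
  obtain ⟨r, hr, hwr⟩ := exists_pos_forall_lt_dist_iterate hp hwp hwx
  obtain ⟨k₀, hk₀⟩ := eventually_atTop.1 (hzx.eventually (closedBall_mem_nhds x (half_pos hr)))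
  have htail : Tendsto (· + k₀) atTop atTop := tendsto_add_atTop_nat k₀
  obtain ⟨K, hK, t, ht, ht0, hret⟩ :=
    exists_strictMono_forall_dist_iterate_le f.continuous hper (hzx.comp htail)
  let A : NonemptyCompacts X :=
    ⟨⟨insert x (range (z ∘ (· + k₀) ∘ K)),
      (hzx.comp (htail.comp hK.tendsto_atTop)).isCompact_insert_range⟩, insert_nonempty _ _⟩
  have hrec : IsRec (hyper f) A :=
    isRec_of_tendsto ht.tendsto_atTop (fun m => ht0.trans_le (ht.monotone m.zero_le))
      (squeeze_zero (fun _ => dist_nonneg) (fun m => dist_hyper_iterate_le f (by positivity)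
        (hret m)) ((tendsto_const_div_atTop_nhds_zero_nat 2).comp ht.tendsto_atTop))
  have hball : (A : Set X) ⊆ closedBall x (r / 2) := by
    rintro _ (rfl | ⟨m, rfl⟩)
    exacts [mem_closedBall_self (half_pos hr).le, hk₀ _ (Nat.le_add_left _ _)]
  have hwA : w ∈ closure (⋃ n, f^[n] '' A) :=
    mem_closure_of_tendsto (hzw.comp (htail.comp hK.tendsto_atTop)) <| Eventually.of_forall
      fun m => mem_iUnion.2 ⟨v (K m + k₀), mem_image_of_mem _ (mem_insert_of_mem _ ⟨m, rfl⟩)⟩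
  exact ⟨A, hrec, not_isAP_hyper f (half_pos hr) hball hwA fun i => by linarith [hwr i]⟩
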